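/- arXiv:1404.6711 — 4 statements merged into one kernel-verified Lean document; each statement's English description precedes it below -/
import Mathlib

section
/- Let R be a commutative noetherian ring, let 𝔞 be an ideal of R, and let 𝒮 be a Serre subcategory of R-modules. If 𝒮 satisfies the C_𝔞 condition, then 𝒮 satisfies the C_√𝔞 condition, where √𝔞 is the radical of 𝔞. -/
/-!
As `√a` is finitely generated, `(√a)^k ≤ a ≤ √a` for some `k`. The second inclusion makes every
`√a`-torsion module `a`-torsion, the first puts `(0 :_M a)` inside `(0 :_M (√a)^k)`. This last
module lies in `S` once `(0 :_M b)` does, `b = √a`: multiplication by an element of `b` maps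
`(0 :_M b^(n+1))` into `(0 :_M b^n)`, so peeling off the generators of `b` one at a time builds
`(0 :_M b^(n+1))` from `(0 :_M b)` by successive extensions by submodules of `(0 :_M b^n)`.
-/

universe u

open Submodule

variable {R : Type u} [CommRing R]

/-- `Γ_a(M)`, the `a`-torsion submodule of `M`: the set of elements annihilated by
some power of the ideal `a`. -/
def torsionGamma (a : Ideal R) (M : Type u) [AddCommGroup M] [Module R M] :
    Submodule R M :=
  ⨆ n : ℕ, Submodule.torsionBySet R M ((a ^ n : Ideal R) : Set R)

/-- The class `S` satisfies the condition `C_a` on the module `M`: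
if `Γ_a(M) = M` and `(0 :_M a) ∈ S` then `M ∈ S`. -/
def CCondOn (S : ModuleCat.{u} R → Prop) (a : Ideal R) (M : ModuleCat.{u} R) : Prop :=
  torsionGamma a M = ⊤ →
    S (ModuleCat.of R (Submodule.torsionBySet R M (a : Set R))) → S M

/-- The class `S` satisfies the condition `C_a` (on every `R`-module). -/
def CCond (S : ModuleCat.{u} R → Prop) (a : Ideal R) : Prop :=
  ∀ M : ModuleCat.{u} R, CCondOn S a M

/-- The class `S` is closed under isomorphisms of `R`-modules. -/
def IsoClosed (S : ModuleCat.{u} R → Prop) : Prop :=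
  ∀ ⦃M N : ModuleCat.{u} R⦄, (M ≃ₗ[R] N) → S M → S N

/-- `S` is a Serre subcategory of the category of `R`-modules: it is closed under
isomorphisms, contains the zero module, and is closed under submodules, quotient modules
and extensions. -/
structure IsSerreClass (S : ModuleCat.{u} R → Prop) : Prop where
  iso : IsoClosed S
  zero : ∀ M : ModuleCat.{u} R, Subsingleton M → S M
  subobj : ∀ (M : ModuleCat.{u} R) (N : Submodule R M), S M → S (ModuleCat.of R N)
  quot : ∀ (M : ModuleCat.{u} R) (N : Submodule R M), S M → S (ModuleCat.of R (M ⧸ N))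
  extension : ∀ (M : ModuleCat.{u} R) (N : Submodule R M),
    S (ModuleCat.of R N) → S (ModuleCat.of R (M ⧸ N)) → S M

theorem Submodule.torsionBySet_ideal_sup (I J : Ideal R) (M : Type*) [AddCommGroup M]
    [Module R M] :
    torsionBySet R M ↑(I ⊔ J) = torsionBySet R M I ⊓ torsionBySet R M J := by
  refine le_antisymm (le_inf (torsionBySet_le_torsionBySet_of_subset fun _ => Ideal.mem_sup_left)
    (torsionBySet_le_torsionBySet_of_subset fun _ => Ideal.mem_sup_right)) fun m hm => ?_
  rw [mem_torsionBySet_iff]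
  rintro ⟨_, hc⟩
  obtain ⟨a, ha, b, hb, rfl⟩ := Submodule.mem_sup.mp hc
  rw [add_smul, (mem_torsionBySet_iff _ _).mp hm.1 ⟨a, ha⟩,
    (mem_torsionBySet_iff _ _).mp hm.2 ⟨b, hb⟩, add_zero]

lemma torsionGamma_anti {a b : Ideal R} (h : a ≤ b) (M : Type u) [AddCommGroup M] [Module R M] :
    torsionGamma b M ≤ torsionGamma a M :=
  iSup_mono fun n => torsionBySet_le_torsionBySet_of_subset (Ideal.pow_right_mono h n)

namespace IsSerreClass

variable {S : ModuleCat.{u} R → Prop} {M : Type u} [AddCommGroup M] [Module R M]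

lemma of_le (hS : IsSerreClass S) {p q : Submodule R M} (h : p ≤ q)
    (hq : S (ModuleCat.of R q)) : S (ModuleCat.of R p) :=
  hS.iso (Submodule.comapSubtypeEquivOfLe h) (hS.subobj (.of R q) (p.comap q.subtype) hq)

lemma of_smul_mem (hS : IsSerreClass S) {x : R} {A B : Submodule R M}
    (hAB : ∀ m ∈ A, x • m ∈ B) (hB : S (ModuleCat.of R B))
    (hA : S (ModuleCat.of R (A ⊓ torsionBy R M x : Submodule R M))) :
    S (ModuleCat.of R A) := by
  let f : A →ₗ[R] M := x • A.subtype
  have hker : LinearMap.ker f = (A ⊓ torsionBy R M x).comap A.subtype := by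
    ext m; simp [f]
  have hrange : LinearMap.range f ≤ B := by
    rintro - ⟨m, rfl⟩
    exact hAB m m.2
  refine hS.extension (ModuleCat.of R A) (LinearMap.ker f) ?_ ?_
  · rw [hker]
    exact hS.iso (Submodule.comapSubtypeEquivOfLe inf_le_left).symm hA
  · exact hS.iso f.quotKerEquivRange.symm (hS.of_le hrange hB)

lemma of_ideal_smul_le (hS : IsSerreClass S) {I : Ideal R} (hI : I.FG) {A B : Submodule R M}
    (hAB : I • A ≤ B) (hB : S (ModuleCat.of R B))
    (hA : S (ModuleCat.of R (A ⊓ torsionBySet R M I : Submodule R M))) :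
    S (ModuleCat.of R A) := by
  induction I, hI using Submodule.fg_induction generalizing A with
  | singleton x =>
    refine hS.of_smul_mem (fun m hm => hAB (smul_mem_smul (mem_span_singleton_self x) hm)) hB ?_
    rwa [← torsionBySet_span_singleton_eq]
  | sup I J _ _ ihI ihJ =>
    rw [sup_smul, sup_le_iff] at hAB
    refine ihJ hAB.2 (ihI ((smul_mono_right I inf_le_left).trans hAB.1) ?_)
    rwa [torsionBySet_ideal_sup, inf_comm (torsionBySet R M I), ← inf_assoc] at hA

lemma torsionBySet_pow (hS : IsSerreClass S) {I : Ideal R} (hI : I.FG)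
    (h : S (ModuleCat.of R (torsionBySet R M I))) (n : ℕ) :
    S (ModuleCat.of R (torsionBySet R M ↑(I ^ n))) := by
  induction n with
  | zero =>
    refine hS.zero _ ?_
    rw [pow_zero, Ideal.one_eq_top, top_coe, torsionBySet_univ]
    infer_instance
  | succ n ih =>
    have hsmul : I • torsionBySet R M ↑(I ^ (n + 1)) ≤ torsionBySet R M ↑(I ^ n) := by
      refine smul_le.mpr fun r hr m hm => (mem_torsionBySet_iff _ _).mpr fun ⟨s, hs⟩ => ?_
      rw [← mul_smul]
      exact (mem_torsionBySet_iff _ _).mp hm ⟨s * r, pow_succ I n ▸ Ideal.mul_mem_mul hs hr⟩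
    have hinf : torsionBySet R M ↑(I ^ (n + 1)) ⊓ torsionBySet R M I = torsionBySet R M I :=
      inf_eq_right.mpr (torsionBySet_le_torsionBySet_of_subset (Ideal.pow_le_self n.succ_ne_zero))
    exact hS.of_ideal_smul_le hI hsmul ih (by rwa [hinf])

end IsSerreClass

lemma CCond.of_le_of_pow_le {S : ModuleCat.{u} R → Prop} {a b : Ideal R} (h : CCond S a)
    (hS : IsSerreClass S) (hb : b.FG) (hab : a ≤ b) {k : ℕ} (hba : b ^ k ≤ a) : CCond S b :=
  fun M hΓ hM => h M (top_unique (hΓ.ge.trans (torsionGamma_anti hab M)))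
    (hS.of_le (torsionBySet_le_torsionBySet_of_subset hba) (hS.torsionBySet_pow hb hM k))

/-- If a Serre subcategory `S` satisfies the `C_a` condition, then it satisfies
the `C_√a` condition. -/
theorem stmt2 [IsNoetherianRing R] (a : Ideal R)
    (S : ModuleCat.{u} R → Prop)
    (hS : IsSerreClass S)
    (hCa : CCond S a) :
    CCond S a.radical := by
  obtain ⟨k, hk⟩ := a.exists_radical_pow_le_of_fg a.radical.fg_of_isNoetherianRing
  exact hCa.of_le_of_pow_le hS a.radical.fg_of_isNoetherianRing a.le_radical hk
end

section
/- Let R be a commutative noetherian ring, let 𝔪_1, …, 𝔪_n be maximal ideals of R, and let 𝒮 be a Serre subcategory of R-modules. If 𝒮 satisfies the C_{𝔪_1 ⋯ 𝔪_n} condition (for the product ideal 𝔪_1 ⋯ 𝔪_n), then 𝒮 satisfies the C_{𝔪_i} condition for each i = 1, …, n. -/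
universe u

open Submodule

variable {R : Type u} [CommRing R]

/-! If `M` is `𝔪`-torsion, every `x ∈ (0 :_M 𝔪₁⋯𝔪ₙ)` is killed by `𝔪ⁿ`: the annihilator of `x`
contains `𝔪₁⋯𝔪ₙ ⊔ 𝔪ᵏ` for some `k`, and the factors `𝔪ⱼ ≠ 𝔪` are comaximal with `𝔪ᵏ`, so they can
be dropped one at a time. Hence `(0 :_M 𝔪₁⋯𝔪ₙ)` is a submodule of `(0 :_M 𝔪ⁿ)`, and `(0 :_M 𝔪ⁿ)`
lies in `S` once `(0 :_M 𝔪)` does: if `g₁, …, g_r` generate `𝔪`, then `x ↦ (gⱼ x)ⱼ` maps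
`(0 :_M 𝔪ᵏ⁺¹)` to `(0 :_M 𝔪ᵏ)ʳ` with kernel inside `(0 :_M 𝔪)`. -/

theorem Ideal.pow_card_le_prod_sup_pow {ι : Type*} (s : Finset ι)
    (m : ι → Ideal R) (hm : ∀ i ∈ s, (m i).IsMaximal) {p : Ideal R} (hp : p.IsMaximal)
    (k : ℕ) : p ^ s.card ≤ (∏ i ∈ s, m i) ⊔ p ^ k := by
  classical
  induction s using Finset.induction_on with
  | empty => simp
  | insert j s hj ih =>
    rw [Finset.prod_insert hj, Finset.card_insert_of_notMem hj]
    have ih := ih fun i hi => hm i (Finset.mem_insert_of_mem hi)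
    by_cases hjp : m j = p
    · calc p ^ (s.card + 1) = p * p ^ s.card := pow_succ' p s.card
        _ ≤ p * ((∏ i ∈ s, m i) ⊔ p ^ k) := Ideal.mul_mono_right ih
        _ = p * (∏ i ∈ s, m i) ⊔ p * p ^ k := mul_sup _ _ _
        _ ≤ m j * (∏ i ∈ s, m i) ⊔ p ^ k := by
          rw [hjp]
          exact sup_le_sup_left Ideal.mul_le_right _
    · have hcop : m j ⊔ p ^ k = ⊤ :=
        Ideal.sup_pow_eq_top ((hm j (Finset.mem_insert_self j s)).coprime_of_ne hp hjp)
      rw [Ideal.mul_sup_eq_of_coprime_left hcop]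
      exact (Ideal.pow_le_pow_right (Nat.le_succ _)).trans ih

section Torsion

variable {M : Type u} [AddCommGroup M] [Module R M]

namespace Submodule

theorem mem_torsionBySet_ideal_iff {I : Ideal R} {x : M} :
    x ∈ torsionBySet R M I ↔ I ≤ Ideal.torsionOf R M x := by
  simp [SetLike.le_def, Ideal.mem_torsionOf_iff]

theorem smul_mem_torsionBySet_pow {p : Ideal R} {a : R} {x : M} {k : ℕ} (ha : a ∈ p)
    (hx : x ∈ torsionBySet R M ↑(p ^ (k + 1))) : a • x ∈ torsionBySet R M ↑(p ^ k) := by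
  rw [mem_torsionBySet_ideal_iff] at hx ⊢
  intro b hb
  rw [Ideal.mem_torsionOf_iff, smul_smul]
  exact hx (pow_succ p k ▸ Ideal.mul_mem_mul hb ha)

end Submodule

theorem torsionGamma_eq_top_of_le {a b : Ideal R} (hab : a ≤ b) (hM : torsionGamma b M = ⊤) :
    torsionGamma a M = ⊤ :=
  top_le_iff.mp <| hM ▸ iSup_mono fun k =>
    torsionBySet_le_torsionBySet_of_subset (Ideal.pow_right_mono hab k)

theorem exists_mem_torsionBySet_pow_of_torsionGamma_eq_top {a : Ideal R}
    (hM : torsionGamma a M = ⊤) (x : M) : ∃ k : ℕ, x ∈ torsionBySet R M ↑(a ^ k) := by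
  have hmono : Monotone fun k : ℕ => torsionBySet R M ↑(a ^ k) :=
    fun i j hij => torsionBySet_le_torsionBySet_pow i j hij a
  have hx : x ∈ torsionGamma a M := hM ▸ mem_top
  exact (mem_iSup_of_directed _ hmono.directed_le).mp hx

theorem torsionBySet_prod_le_torsionBySet_pow_card {ι : Type*}
    (s : Finset ι) (m : ι → Ideal R) (hm : ∀ i ∈ s, (m i).IsMaximal) {p : Ideal R}
    (hp : p.IsMaximal) (hM : torsionGamma p M = ⊤) :
    torsionBySet R M ↑(∏ i ∈ s, m i) ≤ torsionBySet R M ↑(p ^ s.card) := by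
  intro x hx
  obtain ⟨k, hk⟩ := exists_mem_torsionBySet_pow_of_torsionGamma_eq_top hM x
  rw [mem_torsionBySet_ideal_iff] at hx hk ⊢
  exact (Ideal.pow_card_le_prod_sup_pow s m hm hp k).trans (sup_le hx hk)

end Torsion

namespace IsSerreClass

variable {S : ModuleCat.{u} R → Prop}
  {M N : Type u} [AddCommGroup M] [Module R M] [AddCommGroup N] [Module R N]

theorem of_injective (hS : IsSerreClass S) (f : M →ₗ[R] N) (hf : Function.Injective f)
    (hN : S (ModuleCat.of R N)) : S (ModuleCat.of R M) :=
  hS.iso (LinearEquiv.ofInjective f hf).symm (hS.subobj (ModuleCat.of R N) _ hN)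

theorem of_ker_of_range (hS : IsSerreClass S) (f : M →ₗ[R] N)
    (hker : S (ModuleCat.of R (LinearMap.ker f)))
    (hrange : S (ModuleCat.of R (LinearMap.range f))) : S (ModuleCat.of R M) :=
  hS.extension (ModuleCat.of R M) _ hker (hS.iso f.quotKerEquivRange.symm hrange)

theorem prod (hS : IsSerreClass S) (hM : S (ModuleCat.of R M)) (hN : S (ModuleCat.of R N)) :
    S (ModuleCat.of R (M × N)) := by
  refine hS.of_ker_of_range (LinearMap.snd R M N) ?_ ?_
  · rw [LinearMap.ker_snd]
    exact hS.iso (LinearEquiv.ofInjective _ LinearMap.inl_injective) hM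
  · rw [LinearMap.range_eq_top_of_surjective _ LinearMap.snd_surjective]
    exact hS.iso Submodule.topEquiv.symm hN

theorem pi_fin (hS : IsSerreClass S) (hN : S (ModuleCat.of R N)) (r : ℕ) :
    S (ModuleCat.of R (Fin r → N)) := by
  induction r with
  | zero => exact hS.zero _ inferInstance
  | succ r ih => exact hS.iso (Fin.consLinearEquiv R fun _ => N) (hS.prod hN ih)

theorem torsionBySet_pow_of_fg (hS : IsSerreClass S) {p : Ideal R} (hp : p.FG)
    (h : S (ModuleCat.of R (torsionBySet R M p))) (k : ℕ) :
    S (ModuleCat.of R (torsionBySet R M ↑(p ^ k))) := by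
  obtain ⟨r, g, hg⟩ := Submodule.fg_iff_exists_fin_generating_family.mp hp
  induction k with
  | zero =>
    refine hS.zero _ ?_
    simp only [pow_zero, Ideal.one_eq_top, Submodule.top_coe, torsionBySet_univ]
    infer_instance
  | succ k ih =>
    let φ : torsionBySet R M ↑(p ^ (k + 1)) →ₗ[R] Fin r → torsionBySet R M ↑(p ^ k) :=
      LinearMap.pi fun j => (g j • LinearMap.id).restrict fun x hx =>
        smul_mem_torsionBySet_pow (hg ▸ subset_span (Set.mem_range_self j)) hx
    have hker : ∀ x : LinearMap.ker φ, ((x : torsionBySet R M ↑(p ^ (k + 1))) : M) ∈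
        torsionBySet R M p := by
      intro x
      rw [mem_torsionBySet_ideal_iff]
      refine hg.symm.trans_le (span_le.mpr ?_)
      rintro _ ⟨j, rfl⟩
      exact congrArg Subtype.val (congrFun (LinearMap.mem_ker.mp x.2) j)
    refine hS.of_ker_of_range φ ?_ (hS.subobj _ _ (hS.pi_fin ih r))
    exact hS.of_injective
      (LinearMap.codRestrict _ (Submodule.subtype _ ∘ₗ Submodule.subtype _) hker)
      (fun x y hxy => Subtype.ext (Subtype.ext (congrArg Subtype.val hxy :))) h

end IsSerreClass

/-- If a Serre subcategory `S` satisfies `C_{m₁⋯mₙ}` for maximal ideals `m₁, …, mₙ`,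
then it satisfies `C_{mᵢ}` for each `i`. -/
theorem stmt9 [IsNoetherianRing R] (n : ℕ) (m : Fin n → Ideal R)
    (hm : ∀ i, (m i).IsMaximal)
    (S : ModuleCat.{u} R → Prop)
    (hS : IsSerreClass S)
    (h : CCond S (∏ i, m i)) :
    ∀ i, CCond S (m i) := by
  intro i M hM hS_ann
  have hprod_le : ∏ j, m j ≤ m i := Ideal.prod_le_inf.trans (Finset.inf_le (Finset.mem_univ i))
  have hle : torsionBySet R M ↑(∏ j, m j) ≤ torsionBySet R M ↑(m i ^ n) := by
    simpa using torsionBySet_prod_le_torsionBySet_pow_card Finset.univ m (fun j _ => hm j) (hm i) hM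
  refine h M (torsionGamma_eq_top_of_le hprod_le hM) ?_
  exact hS.of_injective (inclusion hle) (inclusion_injective hle)
    (hS.torsionBySet_pow_of_fg (IsNoetherian.noetherian (m i)) hS_ann n)
end

section
/- Let R be a commutative noetherian ring, let 𝔞 be an ideal of R, and let 𝒮_1 and 𝒮_2 be Serre subcategories of R-modules. If both the extension class ⟨𝒮_1, 𝒮_2⟩ and the intersection 𝒮_1 ∩ 𝒮_2 satisfy the C_𝔞 condition, then 𝒮_1 and 𝒮_2 each satisfy the C_𝔞 condition. -/
/-!
If `Γ_𝔞(M) = M` and `(0 :_M 𝔞)` lies in `𝒮₁` or in `𝒮₂`, then `(0 :_M 𝔞) ∈ ⟨𝒮₁, 𝒮₂⟩`, so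
`M ∈ ⟨𝒮₁, 𝒮₂⟩` by `C_𝔞`: some `N ≤ M` has `N ∈ 𝒮₁` and `M/N ∈ 𝒮₂`. By `C_𝔞` for `𝒮₁ ∩ 𝒮₂` it
then suffices to put `(0 :_{M/N} 𝔞)` (for `𝒮₁`), resp. `(0 :_N 𝔞)` (for `𝒮₂`), into `𝒮₁ ∩ 𝒮₂`.
The only nontrivial membership is `(0 :_{M/N} 𝔞) ∈ 𝒮₁`: if `x₁, …, x_r` generate `𝔞` and `K ≤ M`
is the preimage of `(0 :_{M/N} 𝔞)`, then `k ↦ (x_i k)_i` maps `K` to `N^r` with kernel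
`(0 :_M 𝔞)`, so `K ∈ 𝒮₁`, and `(0 :_{M/N} 𝔞)` is a quotient of `K`.
-/

universe u

open Submodule

variable {R : Type u} [CommRing R]

/-- The extension class `⟨S₁, S₂⟩`: modules `M` possessing a submodule `N ∈ S₁`
with `M/N ∈ S₂`. -/
def extClass (S₁ S₂ : ModuleCat.{u} R → Prop) (M : ModuleCat.{u} R) : Prop :=
  ∃ N : Submodule R M, S₁ (ModuleCat.of R N) ∧ S₂ (ModuleCat.of R (M ⧸ N))

section Torsion

variable {a : Ideal R} {M N : Type u} [AddCommGroup M] [Module R M] [AddCommGroup N] [Module R N]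

theorem mem_torsionGamma_iff {m : M} :
    m ∈ torsionGamma a M ↔ ∃ n : ℕ, ∀ y ∈ a ^ n, y • m = 0 := by
  have hmono : Monotone fun n : ℕ => torsionBySet R M ((a ^ n : Ideal R) : Set R) :=
    fun _ _ hnk => torsionBySet_le_torsionBySet_of_subset (Ideal.pow_le_pow_right hnk)
  rw [torsionGamma, mem_iSup_of_directed _ hmono.directed_le]
  simp only [mem_torsionBySet_iff, Subtype.forall, SetLike.mem_coe]

theorem torsionGamma_eq_top_of_surjective (f : M →ₗ[R] N) (hf : Function.Surjective f)
    (h : torsionGamma a M = ⊤) : torsionGamma a N = ⊤ := by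
  refine eq_top_iff.mpr fun y _ => ?_
  obtain ⟨m, rfl⟩ := hf y
  obtain ⟨n, hn⟩ := mem_torsionGamma_iff.mp (h ▸ mem_top : m ∈ torsionGamma a M)
  exact mem_torsionGamma_iff.mpr ⟨n, fun c hc => by rw [← map_smul, hn c hc, map_zero]⟩

theorem torsionGamma_eq_top_of_injective (f : M →ₗ[R] N) (hf : Function.Injective f)
    (h : torsionGamma a N = ⊤) : torsionGamma a M = ⊤ := by
  refine eq_top_iff.mpr fun m _ => ?_
  obtain ⟨n, hn⟩ := mem_torsionGamma_iff.mp (h ▸ mem_top : f m ∈ torsionGamma a N)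
  exact mem_torsionGamma_iff.mpr
    ⟨n, fun c hc => hf (by rw [map_smul, hn c hc, map_zero])⟩

theorem map_mem_torsionBySet {s : Set R} (f : M →ₗ[R] N) {m : M}
    (hm : m ∈ torsionBySet R M s) : f m ∈ torsionBySet R N s :=
  (mem_torsionBySet_iff _ _).mpr fun c => by
    rw [← map_smul, (mem_torsionBySet_iff _ _).mp hm c, map_zero]

theorem mem_torsionBySet_iff_of_span_eq {ι : Type*} {x : ι → R}
    (hx : Ideal.span (Set.range x) = a) {m : M} :
    m ∈ torsionBySet R M a ↔ ∀ i, x i • m = 0 := by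
  rw [← hx, Ideal.span, ← torsionBySet_eq_torsionBySet_span, mem_torsionBySet_iff]
  simp only [Subtype.forall, Set.mem_range, forall_exists_index, forall_apply_eq_imp_iff]

end Torsion

namespace IsSerreClass

variable {S : ModuleCat.{u} R → Prop} (hS : IsSerreClass S)
  {X Y : Type u} [AddCommGroup X] [Module R X] [AddCommGroup Y] [Module R Y]
include hS

theorem of_equiv (e : X ≃ₗ[R] Y) (hX : S (ModuleCat.of R X)) : S (ModuleCat.of R Y) :=
  hS.iso (M := ModuleCat.of R X) (N := ModuleCat.of R Y) e hX

theorem of_injective_s11 (f : X →ₗ[R] Y) (hf : Function.Injective f)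
    (hY : S (ModuleCat.of R Y)) : S (ModuleCat.of R X) :=
  hS.of_equiv (LinearEquiv.ofInjective f hf).symm (hS.subobj (ModuleCat.of R Y) _ hY)

theorem of_surjective (f : X →ₗ[R] Y) (hf : Function.Surjective f)
    (hX : S (ModuleCat.of R X)) : S (ModuleCat.of R Y) :=
  hS.of_equiv (f.quotKerEquivOfSurjective hf) (hS.quot (ModuleCat.of R X) _ hX)

theorem of_ker_of_codomain (f : X →ₗ[R] Y) (hker : S (ModuleCat.of R (LinearMap.ker f)))
    (hY : S (ModuleCat.of R Y)) : S (ModuleCat.of R X) :=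
  hS.extension (ModuleCat.of R X) (LinearMap.ker f) hker
    (hS.of_equiv f.quotKerEquivRange.symm (hS.subobj (ModuleCat.of R Y) _ hY))

theorem prod_s11 (hX : S (ModuleCat.of R X)) (hY : S (ModuleCat.of R Y)) :
    S (ModuleCat.of R (X × Y)) :=
  hS.of_ker_of_codomain (LinearMap.snd R X Y)
    (hS.of_equiv ((LinearEquiv.ofInjective _ LinearMap.inl_injective).trans
      (LinearEquiv.ofEq _ _ (LinearMap.ker_snd R X Y).symm)) hX) hY

theorem pi_fin_s11 (hX : S (ModuleCat.of R X)) : ∀ n : ℕ, S (ModuleCat.of R (Fin n → X))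
  | 0 => hS.zero (ModuleCat.of R (Fin 0 → X)) inferInstance
  | n + 1 => hS.of_equiv (Fin.consLinearEquiv R fun _ => X) (hS.prod_s11 hX (pi_fin_s11 hX n))

theorem torsionBySet_submodule {s : Set R} (N : Submodule R X)
    (hX : S (ModuleCat.of R (torsionBySet R X s))) : S (ModuleCat.of R (torsionBySet R N s)) :=
  hS.of_injective_s11 (N.subtype.restrict fun _ hn => map_mem_torsionBySet N.subtype hn)
    (by simp) hX

theorem torsionBySet_quotient {a : Ideal R} (ha : a.FG) (N : Submodule R X)
    (hN : S (ModuleCat.of R N)) (hX : S (ModuleCat.of R (torsionBySet R X (a : Set R)))) :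
    S (ModuleCat.of R (torsionBySet R (X ⧸ N) (a : Set R))) := by
  obtain ⟨r, x, hx⟩ := fg_iff_exists_fin_generating_family.mp ha
  set K := comap N.mkQ (torsionBySet R (X ⧸ N) (a : Set R))
  have hxK : ∀ i (k : K), x i • (k : X) ∈ N := fun i k => by
    have := (mem_torsionBySet_iff_of_span_eq hx).mp k.2 i
    rwa [← map_smul, mkQ_apply, Quotient.mk_eq_zero] at this
  let f : K →ₗ[R] Fin r → N := LinearMap.pi fun i => (x i • K.subtype).codRestrict N (hxK i)
  have hle : torsionBySet R X (a : Set R) ≤ K := fun _ hm => map_mem_torsionBySet N.mkQ hm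
  have hker : LinearMap.ker f = comap K.subtype (torsionBySet R X (a : Set R)) := by
    ext k
    simp only [f, LinearMap.ker_pi, mem_iInf, LinearMap.mem_ker, mem_comap, coe_subtype,
      mem_torsionBySet_iff_of_span_eq hx]
    exact forall_congr' fun i => ZeroMemClass.coe_eq_zero.symm
  have hK : S (ModuleCat.of R K) :=
    hS.of_ker_of_codomain f (hS.of_equiv ((comapSubtypeEquivOfLe hle).symm.trans
      (LinearEquiv.ofEq _ _ hker.symm)) hX) (hS.pi_fin_s11 hN r)
  refine hS.of_surjective (N.mkQ.restrict fun _ hk => hk) ?_ hK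
  rintro ⟨v, hv⟩
  obtain ⟨m, rfl⟩ := N.mkQ_surjective v
  exact ⟨⟨m, hv⟩, rfl⟩

end IsSerreClass

section Conditions

variable {S₁ S₂ : ModuleCat.{u} R → Prop}

theorem extClass_of_left (hS₁ : IsSerreClass S₁) (hS₂ : IsSerreClass S₂) {M : ModuleCat.{u} R}
    (h : S₁ M) : extClass S₁ S₂ M :=
  ⟨⊤, hS₁.of_equiv topEquiv.symm h, hS₂.zero _ inferInstance⟩

theorem extClass_of_right (hS₁ : IsSerreClass S₁) (hS₂ : IsSerreClass S₂) {M : ModuleCat.{u} R}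
    (h : S₂ M) : extClass S₁ S₂ M :=
  ⟨⊥, hS₁.zero _ inferInstance, hS₂.of_equiv (quotEquivOfEqBot ⊥ rfl).symm h⟩

theorem CCond.left_of_extClass {a : Ideal R} (hext : CCond (extClass S₁ S₂) a)
    (hS₁ : IsSerreClass S₁) (hS₂ : IsSerreClass S₂) (ha : a.FG)
    (hcap : CCond (fun M => S₁ M ∧ S₂ M) a) : CCond S₁ a := by
  intro M hM hann
  obtain ⟨N, hN₁, hQ₂⟩ := hext M hM (extClass_of_left hS₁ hS₂ hann)
  have hQ₁ : S₁ (ModuleCat.of R (M ⧸ N)) :=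
    (hcap _ (torsionGamma_eq_top_of_surjective N.mkQ N.mkQ_surjective hM)
      ⟨hS₁.torsionBySet_quotient ha N hN₁ hann, hS₂.subobj _ _ hQ₂⟩).1
  exact hS₁.extension M N hN₁ hQ₁

theorem CCond.right_of_extClass {a : Ideal R} (hext : CCond (extClass S₁ S₂) a)
    (hS₁ : IsSerreClass S₁) (hS₂ : IsSerreClass S₂)
    (hcap : CCond (fun M => S₁ M ∧ S₂ M) a) : CCond S₂ a := by
  intro M hM hann
  obtain ⟨N, hN₁, hQ₂⟩ := hext M hM (extClass_of_right hS₁ hS₂ hann)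
  have hN₂ : S₂ (ModuleCat.of R N) :=
    (hcap _ (torsionGamma_eq_top_of_injective N.subtype N.injective_subtype hM)
      ⟨hS₁.subobj _ _ hN₁, hS₂.torsionBySet_submodule N hann⟩).2
  exact hS₂.extension M N hN₂ hQ₂

end Conditions

/-- If the extension class `⟨S₁, S₂⟩` and the intersection `S₁ ∩ S₂` satisfy the `C_a`
condition, then `S₁` and `S₂` each satisfy the `C_a` condition. -/
theorem stmt11 [IsNoetherianRing R] (a : Ideal R)
    (S₁ S₂ : ModuleCat.{u} R → Prop)
    (hS₁ : IsSerreClass S₁) (hS₂ : IsSerreClass S₂)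
    (hext : CCond (extClass S₁ S₂) a)
    (hcap : CCond (fun M => S₁ M ∧ S₂ M) a) :
    CCond S₁ a ∧ CCond S₂ a :=
  ⟨hext.left_of_extClass hS₁ hS₂ (IsNoetherian.noetherian a) hcap,
    hext.right_of_extClass hS₁ hS₂ hcap⟩
end

section
/- Let R be a commutative noetherian ring and let 𝔞 be an ideal of R. If the class ℳ of all minimax R-modules and the class ℱ of all R-modules of finite length both satisfy the C_𝔞 condition, then the class of all finitely generated R-modules satisfies the C_𝔞 condition. -/
universe u

open Submodule

variable {R : Type u} [CommRing R]

/-- The class of minimax `R`-modules: modules having a finitely generated submodule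
with artinian quotient. -/
def minimaxClass : ModuleCat.{u} R → Prop :=
  fun M => ∃ N : Submodule R M, Module.Finite R N ∧ IsArtinian R (M ⧸ N)

/-- The class of `R`-modules of finite length (both noetherian and artinian). -/
def finiteLengthClass : ModuleCat.{u} R → Prop :=
  fun M => IsNoetherian R M ∧ IsArtinian R M

/-- The class of finitely generated `R`-modules. -/
def fgClass : ModuleCat.{u} R → Prop :=
  fun M => Module.Finite R M

/-!
Let `M` be `𝔞`-torsion with `(0 :_M 𝔞)` finitely generated. A finitely generated module is
minimax, so `C_𝔞` for minimax modules gives a finitely generated `N ≤ M` with `M/N` artinian.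
The key point is that `(0 :_{M/N} 𝔞)` is again finitely generated: if `𝔞 = (a₁, …, aₛ)`, its
preimage in `M` is the preimage of `Nˢ` under `m ↦ (aᵢ m)ᵢ`, a map whose kernel is
`(0 :_M 𝔞)`. Being also artinian, `(0 :_{M/N} 𝔞)` has finite length, so `C_𝔞` for finite length
modules makes `M/N` noetherian, and hence `M` is finitely generated.
-/

section TorsionGamma

variable {M M' : Type u} [AddCommGroup M] [Module R M]
  [AddCommGroup M'] [Module R M']

theorem Submodule.map_torsionBySet_le (f : M →ₗ[R] M') (s : Set R) :
    (torsionBySet R M s).map f ≤ torsionBySet R M' s := by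
  rintro _ ⟨x, hx, rfl⟩
  rw [SetLike.mem_coe, mem_torsionBySet_iff] at hx
  exact (mem_torsionBySet_iff _ _).mpr fun r => by rw [← map_smul, hx r, map_zero]

theorem map_torsionGamma_le (a : Ideal R) (f : M →ₗ[R] M') :
    (torsionGamma a M).map f ≤ torsionGamma a M' := by
  unfold torsionGamma
  rw [Submodule.map_iSup]
  exact iSup_mono fun n => map_torsionBySet_le f _

theorem torsionGamma_quotient_eq_top {a : Ideal R} (h : torsionGamma a M = ⊤)
    (N : Submodule R M) : torsionGamma a (M ⧸ N) = ⊤ := by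
  rw [eq_top_iff, ← N.range_mkQ, LinearMap.range_eq_map, ← h]
  exact map_torsionGamma_le a N.mkQ

end TorsionGamma

section FiniteGeneration

variable [IsNoetherianRing R] {M P : Type*} [AddCommGroup M] [Module R M]
  [AddCommGroup P] [Module R P]

theorem Submodule.FG.comap_of_fg_ker {f : M →ₗ[R] P} {Q : Submodule R P} (hQ : Q.FG)
    (hker : (LinearMap.ker f).FG) : (Q.comap f).FG :=
  fg_of_fg_map_of_fg_inf_ker f (hQ.of_le (map_comap_le f Q)) (hker.of_le inf_le_right)

theorem Submodule.FG.torsionBySet_quotient {N : Submodule R M} (hN : N.FG) {a : Ideal R}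
    (ha : (torsionBySet R M a).FG) : (torsionBySet R (M ⧸ N) a).FG := by
  obtain ⟨s, rfl⟩ := (IsNoetherian.noetherian a : a.FG)
  let f : M →ₗ[R] (s → M) := LinearMap.pi fun i => (i : R) • LinearMap.id
  have hker : LinearMap.ker f = torsionBySet R M (Ideal.span (s : Set R)) := by
    ext x
    simp [f, ← torsionBySet_eq_torsionBySet_span, mem_torsionBySet_iff, funext_iff]
  have hpreimage : (pi Set.univ fun _ => N).comap f =
      (torsionBySet R (M ⧸ N) (Ideal.span (s : Set R))).comap N.mkQ := by
    ext x
    simp [f, ← torsionBySet_eq_torsionBySet_span, mem_torsionBySet_iff, ← Quotient.mk_smul,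
      Quotient.mk_eq_zero]
  rw [← map_comap_eq_of_surjective N.mkQ_surjective (torsionBySet R _ _), ← hpreimage]
  exact ((fg_pi fun _ => hN).comap_of_fg_ker (hker ▸ ha)).map _

end FiniteGeneration

theorem minimaxClass_of_finite (M : ModuleCat.{u} R) [Module.Finite R M] : minimaxClass M := by
  refine ⟨⊤, Module.Finite.equiv topEquiv.symm, ?_⟩
  have : Subsingleton (M ⧸ (⊤ : Submodule R M)) := Submodule.Quotient.subsingleton_iff.mpr rfl
  infer_instance

theorem finiteLengthClass_of_finite [IsNoetherianRing R] (M : ModuleCat.{u} R)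
    [Module.Finite R M] [IsArtinian R M] : finiteLengthClass M :=
  ⟨isNoetherian_of_isNoetherianRing_of_finite R M, inferInstance⟩

/-- If the class of minimax modules and the class of finite length modules both satisfy
the `C_a` condition, then the class of finitely generated modules satisfies `C_a`. -/
theorem stmt12 [IsNoetherianRing R] (a : Ideal R)
    (hmm : CCond (minimaxClass : ModuleCat.{u} R → Prop) a)
    (hfl : CCond (finiteLengthClass : ModuleCat.{u} R → Prop) a) :
    CCond (fgClass : ModuleCat.{u} R → Prop) a := by
  intro M hΓ (hsoc : Module.Finite R (torsionBySet R M a))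
  obtain ⟨N, hN, hQ⟩ := hmm M hΓ (minimaxClass_of_finite _)
  have hX : Module.Finite R (torsionBySet R (M ⧸ N) a) :=
    Module.Finite.iff_fg.mpr <|
      (Module.Finite.iff_fg.mp hN).torsionBySet_quotient (Module.Finite.iff_fg.mp hsoc)
  obtain ⟨hQ_noetherian, -⟩ :=
    hfl (.of R (M ⧸ N)) (torsionGamma_quotient_eq_top hΓ N) (finiteLengthClass_of_finite _)
  exact Module.Finite.of_submodule_quotient N
end
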